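/- arXiv:1310.8613 — 2 statements merged into one kernel-verified Lean document; each statement's English description precedes it below -/
import Mathlib

section
/- Let ε > 0 and let M be a matrix game with value v. If the action sequences of both players satisfy limsup_{t→∞} r(t) ≤ ε (player 1) and limsup_{t→∞} r₂(t) ≤ ε (player 2), then the average realized payoff satisfies v − ε ≤ liminf_{t→∞} g(t) ≤ limsup_{t→∞} g(t) ≤ v + ε. -/
open Filter Finset

noncomputable section

/-- A mixed strategy: a probability vector over `Fin k`. -/
def IsMixed {k : ℕ} (σ : Fin k → ℝ) : Prop :=
  (∀ i, 0 ≤ σ i) ∧ ∑ i, σ i = 1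

/-- Expected payoff `σ₁ M σ₂` to player 1. -/
def pay {m n : ℕ} (M : Fin m → Fin n → ℝ) (σ₁ : Fin m → ℝ) (σ₂ : Fin n → ℝ) : ℝ :=
  ∑ i, ∑ j, σ₁ i * M i j * σ₂ j

/-- `u(br, σ₂) = max_{σ₁} σ₁ M σ₂`. -/
def brVal1 {m n : ℕ} (M : Fin m → Fin n → ℝ) (σ₂ : Fin n → ℝ) : ℝ :=
  sSup {x : ℝ | ∃ σ₁, IsMixed σ₁ ∧ x = pay M σ₁ σ₂}

/-- `u(σ₁, br) = min_{σ₂} σ₁ M σ₂`. -/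
def brVal2 {m n : ℕ} (M : Fin m → Fin n → ℝ) (σ₁ : Fin m → ℝ) : ℝ :=
  sInf {x : ℝ | ∃ σ₂, IsMixed σ₂ ∧ x = pay M σ₁ σ₂}

/-- `M` has value `v`: `max_{σ₁} min_{σ₂} σ₁ M σ₂ = min_{σ₂} max_{σ₁} σ₁ M σ₂ = v`. -/
def HasValue {m n : ℕ} (M : Fin m → Fin n → ℝ) (v : ℝ) : Prop :=
  sSup {x : ℝ | ∃ σ₁, IsMixed σ₁ ∧ x = brVal2 M σ₁} = v ∧
  sInf {x : ℝ | ∃ σ₂, IsMixed σ₂ ∧ x = brVal1 M σ₂} = v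

/-- `(σ₁, σ₂)` is an `ε`-equilibrium of `M`. -/
def IsEpsEquilibrium {m n : ℕ} (M : Fin m → Fin n → ℝ) (ε : ℝ)
    (σ₁ : Fin m → ℝ) (σ₂ : Fin n → ℝ) : Prop :=
  brVal1 M σ₂ - pay M σ₁ σ₂ ≤ ε ∧ pay M σ₁ σ₂ - brVal2 M σ₁ ≤ ε

/-- Empirical frequencies of the action sequence `a` over steps `1, …, t`. -/
def empFreq {k : ℕ} (a : ℕ → Fin k) (t : ℕ) : Fin k → ℝ :=
  fun x => (((Finset.Icc 1 t).filter (fun s => a s = x)).card : ℝ) / t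

/-- `g(t)`: average payoff to player 1 over steps `1, …, t`. -/
def avgPay {m n : ℕ} (M : Fin (m+1) → Fin (n+1) → ℝ)
    (iseq : ℕ → Fin (m+1)) (jseq : ℕ → Fin (n+1)) (t : ℕ) : ℝ :=
  (∑ s ∈ Finset.Icc 1 t, M (iseq s) (jseq s)) / t

/-- `g_max(t)`: maximal average payoff over player 1's pure actions. -/
def gmax {m n : ℕ} (M : Fin (m+1) → Fin (n+1) → ℝ)
    (jseq : ℕ → Fin (n+1)) (t : ℕ) : ℝ :=
  (Finset.univ.sup' Finset.univ_nonempty (fun i => ∑ s ∈ Finset.Icc 1 t, M i (jseq s))) / t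

/-- `r(t)`: average regret of player 1. -/
def regret1 {m n : ℕ} (M : Fin (m+1) → Fin (n+1) → ℝ)
    (iseq : ℕ → Fin (m+1)) (jseq : ℕ → Fin (n+1)) (t : ℕ) : ℝ :=
  gmax M jseq t - avgPay M iseq jseq t

/-- `r₂(t)`: average regret of player 2 (whose payoffs are `1 - a_{ij}`). -/
def regret2 {m n : ℕ} (M : Fin (m+1) → Fin (n+1) → ℝ)
    (iseq : ℕ → Fin (m+1)) (jseq : ℕ → Fin (n+1)) (t : ℕ) : ℝ :=
  (Finset.univ.sup' Finset.univ_nonempty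
      (fun j => ∑ s ∈ Finset.Icc 1 t, (1 - M (iseq s) j))) / t -
    (∑ s ∈ Finset.Icc 1 t, (1 - M (iseq s) (jseq s))) / t

/-! ### Auxiliary lemmas -/

def purestrat {k : ℕ} (i : Fin k) : Fin k → ℝ := fun x => if x = i then 1 else 0

lemma isMixed_pure {k : ℕ} (i : Fin k) : IsMixed (purestrat i) :=
  ⟨fun x => by unfold purestrat; positivity, by simp [purestrat]⟩

lemma pay_nonneg {m n : ℕ} {M : Fin m → Fin n → ℝ} (hM : ∀ i j, M i j ∈ Set.Icc (0:ℝ) 1)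
    {σ₁ σ₂} (h1 : IsMixed σ₁) (h2 : IsMixed σ₂) : 0 ≤ pay M σ₁ σ₂ := by
  apply Finset.sum_nonneg; intro i _; apply Finset.sum_nonneg; intro j _
  have := (hM i j).1
  have := h1.1 i; have := h2.1 j; positivity

lemma pay_le_one {m n : ℕ} {M : Fin m → Fin n → ℝ} (hM : ∀ i j, M i j ∈ Set.Icc (0:ℝ) 1)
    {σ₁ σ₂} (h1 : IsMixed σ₁) (h2 : IsMixed σ₂) : pay M σ₁ σ₂ ≤ 1 := by
  have h : pay M σ₁ σ₂ ≤ ∑ i, ∑ j, σ₁ i * 1 * σ₂ j := by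
    apply Finset.sum_le_sum; intro i _; apply Finset.sum_le_sum; intro j _
    apply mul_le_mul_of_nonneg_right _ (h2.1 j)
    exact mul_le_mul_of_nonneg_left (hM i j).2 (h1.1 i)
  calc pay M σ₁ σ₂ ≤ ∑ i, ∑ j, σ₁ i * 1 * σ₂ j := h
    _ = (∑ i, σ₁ i) * (∑ j, σ₂ j) := by rw [Finset.sum_mul_sum]; ring_nf
    _ = 1 := by rw [h1.2, h2.2, one_mul]

lemma pay_eq_left {m n : ℕ} (M : Fin m → Fin n → ℝ) (σ₁ σ₂) :
    pay M σ₁ σ₂ = ∑ i, σ₁ i * (∑ j, M i j * σ₂ j) := by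
  unfold pay; apply Finset.sum_congr rfl; intro i _
  rw [Finset.mul_sum]; apply Finset.sum_congr rfl; intro j _; ring

lemma pay_eq_right {m n : ℕ} (M : Fin m → Fin n → ℝ) (σ₁ σ₂) :
    pay M σ₁ σ₂ = ∑ j, σ₂ j * (∑ i, σ₁ i * M i j) := by
  unfold pay; rw [Finset.sum_comm]; apply Finset.sum_congr rfl; intro j _
  rw [Finset.mul_sum]; apply Finset.sum_congr rfl; intro i _; ring

lemma wavg_le_sup {k : ℕ} {σ : Fin (k+1) → ℝ} (h : IsMixed σ) (c : Fin (k+1) → ℝ) :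
    ∑ i, σ i * c i ≤ Finset.univ.sup' Finset.univ_nonempty c := by
  calc ∑ i, σ i * c i ≤ ∑ i, σ i * Finset.univ.sup' Finset.univ_nonempty c := by
        apply Finset.sum_le_sum; intro i _
        exact mul_le_mul_of_nonneg_left (Finset.le_sup' c (Finset.mem_univ i)) (h.1 i)
    _ = _ := by rw [← Finset.sum_mul, h.2, one_mul]

lemma inf_le_wavg {k : ℕ} {σ : Fin (k+1) → ℝ} (h : IsMixed σ) (c : Fin (k+1) → ℝ) :
    Finset.univ.inf' Finset.univ_nonempty c ≤ ∑ i, σ i * c i := by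
  calc Finset.univ.inf' Finset.univ_nonempty c
      = ∑ i, σ i * Finset.univ.inf' Finset.univ_nonempty c := by
        rw [← Finset.sum_mul, h.2, one_mul]
    _ ≤ ∑ i, σ i * c i := by
        apply Finset.sum_le_sum; intro i _
        exact mul_le_mul_of_nonneg_left (Finset.inf'_le c (Finset.mem_univ i)) (h.1 i)

lemma brVal1_le_sup {m n : ℕ} {M : Fin (m+1) → Fin (n+1) → ℝ}
    {σ₂ : Fin (n+1) → ℝ} (h2 : IsMixed σ₂) :
    brVal1 M σ₂ ≤ Finset.univ.sup' Finset.univ_nonempty (fun i => ∑ j, M i j * σ₂ j) := by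
  refine csSup_le ⟨_, purestrat 0, isMixed_pure 0, rfl⟩ ?_
  rintro x ⟨σ₁, h1, rfl⟩
  rw [pay_eq_left]
  exact wavg_le_sup h1 _

lemma inf_le_brVal2 {m n : ℕ} {M : Fin (m+1) → Fin (n+1) → ℝ}
    {σ₁ : Fin (m+1) → ℝ} (h1 : IsMixed σ₁) :
    Finset.univ.inf' Finset.univ_nonempty (fun j => ∑ i, σ₁ i * M i j) ≤ brVal2 M σ₁ := by
  refine le_csInf ⟨_, purestrat 0, isMixed_pure 0, rfl⟩ ?_
  rintro x ⟨σ₂, h2, rfl⟩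
  rw [pay_eq_right]
  exact inf_le_wavg h2 _

lemma brVal1_nonneg {m n : ℕ} {M : Fin (m+1) → Fin (n+1) → ℝ}
    (hM : ∀ i j, M i j ∈ Set.Icc (0:ℝ) 1)
    {σ₂ : Fin (n+1) → ℝ} (h2 : IsMixed σ₂) : 0 ≤ brVal1 M σ₂ := by
  have hbd : BddAbove {x : ℝ | ∃ σ₁, IsMixed σ₁ ∧ x = pay M σ₁ σ₂} :=
    ⟨1, by rintro x ⟨σ₁, h1, rfl⟩; exact pay_le_one hM h1 h2⟩
  exact le_trans (pay_nonneg hM (isMixed_pure 0) h2)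
    (le_csSup hbd ⟨purestrat 0, isMixed_pure 0, rfl⟩)

lemma brVal2_le_one {m n : ℕ} {M : Fin (m+1) → Fin (n+1) → ℝ}
    (hM : ∀ i j, M i j ∈ Set.Icc (0:ℝ) 1)
    {σ₁ : Fin (m+1) → ℝ} (h1 : IsMixed σ₁) : brVal2 M σ₁ ≤ 1 := by
  have hbd : BddBelow {x : ℝ | ∃ σ₂, IsMixed σ₂ ∧ x = pay M σ₁ σ₂} :=
    ⟨0, by rintro x ⟨σ₂, h2, rfl⟩; exact pay_nonneg hM h1 h2⟩
  exact le_trans (csInf_le hbd ⟨purestrat 0, isMixed_pure 0, rfl⟩)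
    (pay_le_one hM h1 (isMixed_pure 0))

lemma v_le_brVal1 {m n : ℕ} {M : Fin (m+1) → Fin (n+1) → ℝ}
    (hM : ∀ i j, M i j ∈ Set.Icc (0:ℝ) 1)
    {v : ℝ} (hv : HasValue M v) {σ₂ : Fin (n+1) → ℝ} (h2 : IsMixed σ₂) :
    v ≤ brVal1 M σ₂ := by
  rw [← hv.2]
  exact csInf_le ⟨0, by rintro x ⟨σ₂', h2', rfl⟩; exact brVal1_nonneg hM h2'⟩ ⟨σ₂, h2, rfl⟩

lemma brVal2_le_v {m n : ℕ} {M : Fin (m+1) → Fin (n+1) → ℝ}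
    (hM : ∀ i j, M i j ∈ Set.Icc (0:ℝ) 1)
    {v : ℝ} (hv : HasValue M v) {σ₁ : Fin (m+1) → ℝ} (h1 : IsMixed σ₁) :
    brVal2 M σ₁ ≤ v := by
  rw [← hv.1]
  exact le_csSup ⟨1, by rintro x ⟨σ₁', h1', rfl⟩; exact brVal2_le_one hM h1'⟩ ⟨σ₁, h1, rfl⟩

lemma fiber_sum {k : ℕ} (a : ℕ → Fin k) (t : ℕ) (f : Fin k → ℝ) :
    ∑ j, (((Finset.Icc 1 t).filter (fun s => a s = j)).card : ℝ) * f j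
      = ∑ s ∈ Finset.Icc 1 t, f (a s) := by
  rw [← Finset.sum_fiberwise (Finset.Icc 1 t) a (fun s => f (a s))]
  apply Finset.sum_congr rfl; intro j _
  rw [Finset.sum_congr rfl (fun s hs => by rw [(Finset.mem_filter.mp hs).2]),
    Finset.sum_const, nsmul_eq_mul]

lemma isMixed_empFreq {k : ℕ} (a : ℕ → Fin k) {t : ℕ} (ht : 1 ≤ t) :
    IsMixed (empFreq a t) := by
  constructor
  · intro x; unfold empFreq; positivity
  · have h := fiber_sum a t (fun _ => (1:ℝ))
    simp only [mul_one] at h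
    unfold empFreq
    rw [← Finset.sum_div, h]
    simp only [Finset.sum_const, nsmul_eq_mul, mul_one, Nat.card_Icc]
    have h2 : (t + 1 - 1 : ℕ) = t := by omega
    have h3 : (0:ℝ) < t := by exact_mod_cast Nat.lt_of_lt_of_le Nat.zero_lt_one ht
    rw [h2, div_self (ne_of_gt h3)]

lemma empFreq_pay_sum {k : ℕ} (a : ℕ → Fin k) (t : ℕ) (f : Fin k → ℝ) :
    ∑ j, f j * empFreq a t j = (∑ s ∈ Finset.Icc 1 t, f (a s)) / t := by
  unfold empFreq
  rw [← fiber_sum a t f, Finset.sum_div]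
  apply Finset.sum_congr rfl; intro j _; ring

lemma empFreq_pay_sum' {k : ℕ} (a : ℕ → Fin k) (t : ℕ) (f : Fin k → ℝ) :
    ∑ j, empFreq a t j * f j = (∑ s ∈ Finset.Icc 1 t, f (a s)) / t := by
  rw [← empFreq_pay_sum a t f]
  apply Finset.sum_congr rfl; intro j _; ring

lemma sup'_const_sub {α : Type*} [Fintype α] [Nonempty α] (a : ℝ) (c : α → ℝ) :
    Finset.univ.sup' Finset.univ_nonempty (fun j => a - c j)
      = a - Finset.univ.inf' Finset.univ_nonempty c := by
  apply le_antisymm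
  · apply Finset.sup'_le; intro j _
    have := Finset.inf'_le c (Finset.mem_univ j)
    linarith
  · obtain ⟨j, hj, hje⟩ := Finset.exists_mem_eq_inf' Finset.univ_nonempty c
    rw [hje]
    exact Finset.le_sup' (fun j => a - c j) hj

/-- Key bound 1: for `t ≥ 1`, `v ≤ gmax t`. -/
lemma v_le_gmax {m n : ℕ} {M : Fin (m+1) → Fin (n+1) → ℝ}
    (hM : ∀ i j, M i j ∈ Set.Icc (0:ℝ) 1) {v : ℝ} (hv : HasValue M v)
    (jseq : ℕ → Fin (n+1)) {t : ℕ} (ht : 1 ≤ t) :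
    v ≤ gmax M jseq t := by
  have hσ := isMixed_empFreq jseq ht
  have h1 := v_le_brVal1 hM hv hσ
  have h2 := brVal1_le_sup (M := M) hσ
  have h3 : Finset.univ.sup' Finset.univ_nonempty (fun i => ∑ j, M i j * empFreq jseq t j)
      ≤ gmax M jseq t := by
    apply Finset.sup'_le; intro i _
    rw [empFreq_pay_sum jseq t (fun j => M i j)]
    unfold gmax
    have h4 : (0:ℝ) < t := by exact_mod_cast Nat.lt_of_lt_of_le Nat.zero_lt_one ht
    gcongr
    exact Finset.le_sup' (fun i => ∑ s ∈ Finset.Icc 1 t, M i (jseq s)) (Finset.mem_univ i)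
  linarith

/-- Key bound 2: for `t ≥ 1`, `(inf over pure columns of cumulative payoff)/t ≤ v`. -/
lemma inf_div_le_v {m n : ℕ} {M : Fin (m+1) → Fin (n+1) → ℝ}
    (hM : ∀ i j, M i j ∈ Set.Icc (0:ℝ) 1) {v : ℝ} (hv : HasValue M v)
    (iseq : ℕ → Fin (m+1)) {t : ℕ} (ht : 1 ≤ t) :
    (Finset.univ.inf' Finset.univ_nonempty
      (fun j => ∑ s ∈ Finset.Icc 1 t, M (iseq s) j)) / t ≤ v := by
  have hσ := isMixed_empFreq iseq ht
  have h1 := brVal2_le_v hM hv hσ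
  have h2 := inf_le_brVal2 (M := M) hσ
  have h3 : (Finset.univ.inf' Finset.univ_nonempty
      (fun j => ∑ s ∈ Finset.Icc 1 t, M (iseq s) j)) / t
      ≤ Finset.univ.inf' Finset.univ_nonempty (fun j => ∑ i, empFreq iseq t i * M i j) := by
    apply Finset.le_inf'; intro j _
    rw [empFreq_pay_sum' iseq t (fun i => M i j)]
    have h4 : (0:ℝ) < t := by exact_mod_cast Nat.lt_of_lt_of_le Nat.zero_lt_one ht
    gcongr
    exact Finset.inf'_le (fun j => ∑ s ∈ Finset.Icc 1 t, M (iseq s) j) (Finset.mem_univ j)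
  linarith

/-- Rewriting `regret2`. -/
lemma regret2_eq {m n : ℕ} (M : Fin (m+1) → Fin (n+1) → ℝ)
    (iseq : ℕ → Fin (m+1)) (jseq : ℕ → Fin (n+1)) (t : ℕ) :
    regret2 M iseq jseq t = avgPay M iseq jseq t -
      (Finset.univ.inf' Finset.univ_nonempty
        (fun j => ∑ s ∈ Finset.Icc 1 t, M (iseq s) j)) / t := by
  unfold regret2 avgPay
  have h1 : ∀ j : Fin (n+1), ∑ s ∈ Finset.Icc 1 t, (1 - M (iseq s) j)
      = (t : ℝ) - ∑ s ∈ Finset.Icc 1 t, M (iseq s) j := by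
    intro j
    rw [Finset.sum_sub_distrib, Finset.sum_const, nsmul_eq_mul, mul_one, Nat.card_Icc]
    congr 1
  have h2 : ∑ s ∈ Finset.Icc 1 t, (1 - M (iseq s) (jseq s))
      = (t : ℝ) - ∑ s ∈ Finset.Icc 1 t, M (iseq s) (jseq s) := by
    rw [Finset.sum_sub_distrib, Finset.sum_const, nsmul_eq_mul, mul_one, Nat.card_Icc]
    congr 1
  have h3 : (Finset.univ.sup' Finset.univ_nonempty
      (fun j => ∑ s ∈ Finset.Icc 1 t, (1 - M (iseq s) j)))
      = (t : ℝ) - Finset.univ.inf' Finset.univ_nonempty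
          (fun j => ∑ s ∈ Finset.Icc 1 t, M (iseq s) j) := by
    rw [← sup'_const_sub]
    apply Finset.sup'_congr _ rfl
    intro j _; exact h1 j
  rw [h2, h3, sub_div, sub_div]
  ring

/-- If both players' average regrets satisfy `limsup r(t) ≤ ε`, then the average
realized payoff satisfies `v − ε ≤ liminf g(t) ≤ limsup g(t) ≤ v + ε`. -/
theorem eps_hannan_implies_avg_payoff_bounds (m n : ℕ) (M : Fin (m+1) → Fin (n+1) → ℝ)
    (hM : ∀ i j, M i j ∈ Set.Icc (0:ℝ) 1)
    (v ε : ℝ) (hε : 0 < ε) (hv : HasValue M v)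
    (iseq : ℕ → Fin (m+1)) (jseq : ℕ → Fin (n+1))
    (hr1 : Filter.limsup (fun t => regret1 M iseq jseq t) Filter.atTop ≤ ε)
    (hr2 : Filter.limsup (fun t => regret2 M iseq jseq t) Filter.atTop ≤ ε) :
    v - ε ≤ Filter.liminf (fun t => avgPay M iseq jseq t) Filter.atTop ∧
      Filter.liminf (fun t => avgPay M iseq jseq t) Filter.atTop ≤
        Filter.limsup (fun t => avgPay M iseq jseq t) Filter.atTop ∧
      Filter.limsup (fun t => avgPay M iseq jseq t) Filter.atTop ≤ v + ε := by
  -- basic bounds on avgPay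
  have havg0 : ∀ t : ℕ, 0 ≤ avgPay M iseq jseq t := by
    intro t
    apply div_nonneg _ (Nat.cast_nonneg t)
    exact Finset.sum_nonneg fun s _ => (hM _ _).1
  have havg1 : ∀ t : ℕ, avgPay M iseq jseq t ≤ 1 := by
    intro t
    rcases Nat.eq_zero_or_pos t with h | h
    · subst h; simp [avgPay]
    · rw [avgPay, div_le_one (by exact_mod_cast h)]
      calc ∑ s ∈ Finset.Icc 1 t, M (iseq s) (jseq s)
          ≤ ∑ s ∈ Finset.Icc 1 t, 1 := Finset.sum_le_sum fun s _ => (hM _ _).2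
        _ = (t : ℝ) := by
            rw [Finset.sum_const, nsmul_eq_mul, mul_one, Nat.card_Icc]
            push_cast [Nat.add_sub_cancel]; ring
  have hbdd_above : IsBoundedUnder (· ≤ ·) atTop (fun t => avgPay M iseq jseq t) :=
    isBoundedUnder_of ⟨1, havg1⟩
  have hbdd_below : IsBoundedUnder (· ≥ ·) atTop (fun t => avgPay M iseq jseq t) :=
    isBoundedUnder_of ⟨0, havg0⟩
  have hcob_le : IsCoboundedUnder (· ≤ ·) atTop (fun t => avgPay M iseq jseq t) :=
    hbdd_below.isCoboundedUnder_le
  have hcob_ge : IsCoboundedUnder (· ≥ ·) atTop (fun t => avgPay M iseq jseq t) :=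
    hbdd_above.isCoboundedUnder_ge
  -- pointwise bounds
  have hptw1 : ∀ t : ℕ, 1 ≤ t → v - regret1 M iseq jseq t ≤ avgPay M iseq jseq t := by
    intro t ht
    have := v_le_gmax hM hv jseq ht
    unfold regret1 at *
    linarith
  have hptw2 : ∀ t : ℕ, 1 ≤ t → avgPay M iseq jseq t ≤ v + regret2 M iseq jseq t := by
    intro t ht
    have h1 := inf_div_le_v hM hv iseq ht
    have h2 := regret2_eq M iseq jseq t
    linarith
  -- boundedness of regrets above
  have hreg1_bdd : IsBoundedUnder (· ≤ ·) atTop (fun t => regret1 M iseq jseq t) := by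
    refine isBoundedUnder_of ⟨1 + 1, fun t => ?_⟩
    unfold regret1 gmax
    have hgm : (Finset.univ.sup' Finset.univ_nonempty
        (fun i => ∑ s ∈ Finset.Icc 1 t, M i (jseq s))) / t ≤ 1 := by
      rcases Nat.eq_zero_or_pos t with h | h
      · subst h; simp
      · rw [div_le_one (by exact_mod_cast h)]
        apply Finset.sup'_le; intro i _
        calc ∑ s ∈ Finset.Icc 1 t, M i (jseq s)
            ≤ ∑ s ∈ Finset.Icc 1 t, 1 := Finset.sum_le_sum fun s _ => (hM _ _).2
          _ = (t : ℝ) := by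
              rw [Finset.sum_const, nsmul_eq_mul, mul_one, Nat.card_Icc]
              push_cast [Nat.add_sub_cancel]; ring
    have := havg0 t
    linarith
  have hreg2_bdd : IsBoundedUnder (· ≤ ·) atTop (fun t => regret2 M iseq jseq t) := by
    refine isBoundedUnder_of ⟨1 + 1, fun t => ?_⟩
    rw [regret2_eq]
    have hinf : 0 ≤ (Finset.univ.inf' Finset.univ_nonempty
        (fun j => ∑ s ∈ Finset.Icc 1 t, M (iseq s) j)) / t := by
      apply div_nonneg _ (Nat.cast_nonneg t)
      obtain ⟨j, _, hje⟩ := Finset.exists_mem_eq_inf' Finset.univ_nonempty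
        (fun j => ∑ s ∈ Finset.Icc 1 t, M (iseq s) j)
      rw [hje]
      exact Finset.sum_nonneg fun s _ => (hM _ _).1
    have := havg1 t
    linarith
  refine ⟨?_, liminf_le_limsup hbdd_above hbdd_below, ?_⟩
  · -- v - ε ≤ liminf
    rw [show v - ε = v - ε + 0 by ring]
    refine le_of_forall_pos_le_add fun δ hδ => ?_
    have hev : ∀ᶠ t in atTop, regret1 M iseq jseq t < ε + δ :=
      eventually_lt_of_limsup_lt (lt_of_le_of_lt hr1 (by linarith)) hreg1_bdd
    have hev2 : ∀ᶠ t in atTop, v - (ε + δ) ≤ avgPay M iseq jseq t := by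
      filter_upwards [hev, eventually_ge_atTop 1] with t h ht
      have := hptw1 t ht
      linarith
    have := le_liminf_of_le hcob_ge hev2
    linarith
  · -- limsup ≤ v + ε
    refine le_of_forall_pos_le_add fun δ hδ => ?_
    have hev : ∀ᶠ t in atTop, regret2 M iseq jseq t < ε + δ :=
      eventually_lt_of_limsup_lt (lt_of_le_of_lt hr2 (by linarith)) hreg2_bdd
    have hev2 : ∀ᶠ t in atTop, avgPay M iseq jseq t ≤ v + ε + δ := by
      filter_upwards [hev, eventually_ge_atTop 1] with t h ht
      have := hptw2 t ht
      linarith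
    exact limsup_le_of_le hcob_le hev2
end
end

section
/- Let ε > 0. For each pair (i,j) ∈ {1,…,m}×{1,…,n}, let v^{ij} ∈ [0,1] and let (g^{ij}(k))_{k≥1} be a sequence in [0,1] such that for every δ' > 0 there exists k₀ with |g^{ij}(k) − v^{ij}| < ε + δ' for all k ≥ k₀. Let M be the m×n matrix game with entries v^{ij} and value v. Let (i_s)_{s≥1}, (j_s)_{s≥1} be action sequences in which every pair (i,j) occurs infinitely often, and let the observed payoff at step s be g^{i_s j_s}(k_s), where k_s = #{s' ≤ s : (i_{s'}, j_{s'}) = (i_s, j_s)}. If both players' average regrets with respect to these observed payoffs satisfy limsup_{t→∞} r(t) ≤ ε and limsup_{t→∞} r₂(t) ≤ ε, then: (a) for every δ > 0 there exists t₀ such that for all t ≥ t₀ the empirical frequencies (σ̂₁(t), σ̂₂(t)) form an (8ε + δ)-equilibrium of M; and (b) for every δ > 0, v − 2ε − δ ≤ liminf_{t→∞} g(t) ≤ limsup_{t→∞} g(t) ≤ v + 2ε + δ, where g(t) is the average observed payoff. -/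
open Filter Finset

noncomputable section

/-- Number of steps `s' ∈ {1, …, s}` at which the joint action `(i, j)` was played. -/
def visitCount {m n : ℕ} (iseq : ℕ → Fin (m+1)) (jseq : ℕ → Fin (n+1))
    (i : Fin (m+1)) (j : Fin (n+1)) (s : ℕ) : ℕ :=
  ((Finset.Icc 1 s).filter (fun s' => iseq s' = i ∧ jseq s' = j)).card

/- ### Auxiliary lemmas -/

lemma pay_eq_rows {m n : ℕ} (M : Fin m → Fin n → ℝ) (σ₁ : Fin m → ℝ) (σ₂ : Fin n → ℝ) :
    pay M σ₁ σ₂ = ∑ i, σ₁ i * ∑ j, M i j * σ₂ j := by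
  unfold pay
  refine Finset.sum_congr rfl fun i _ => ?_
  rw [Finset.mul_sum]
  exact Finset.sum_congr rfl fun j _ => by ring

lemma pay_eq_cols {m n : ℕ} (M : Fin m → Fin n → ℝ) (σ₁ : Fin m → ℝ) (σ₂ : Fin n → ℝ) :
    pay M σ₁ σ₂ = ∑ j, σ₂ j * ∑ i, σ₁ i * M i j := by
  unfold pay
  rw [Finset.sum_comm]
  refine Finset.sum_congr rfl fun j _ => ?_
  rw [Finset.mul_sum]
  exact Finset.sum_congr rfl fun i _ => by ring

lemma isMixed_pure_s15 {k : ℕ} (i₀ : Fin k) : IsMixed (fun i => if i = i₀ then (1:ℝ) else 0) :=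
  ⟨fun i => by dsimp only; split <;> norm_num, by simp⟩

lemma brVal1_isGreatest {m n : ℕ} (M : Fin (m+1) → Fin (n+1) → ℝ) (σ₂ : Fin (n+1) → ℝ)
    (_h₂ : IsMixed σ₂) :
    IsGreatest {x : ℝ | ∃ σ₁, IsMixed σ₁ ∧ x = pay M σ₁ σ₂}
      (Finset.univ.sup' Finset.univ_nonempty (fun i => ∑ j, M i j * σ₂ j)) := by
  constructor
  · obtain ⟨i₀, _, hi₀⟩ := Finset.exists_mem_eq_sup' Finset.univ_nonempty
      (fun i => ∑ j, M i j * σ₂ j)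
    refine ⟨fun i => if i = i₀ then 1 else 0, isMixed_pure_s15 i₀, ?_⟩
    rw [hi₀, pay_eq_rows]
    rw [Finset.sum_eq_single_of_mem i₀ (Finset.mem_univ _)]
    · simp
    · intro i _ hi; simp [hi]
  · rintro x ⟨σ₁, h₁, rfl⟩
    rw [pay_eq_rows]
    calc ∑ i, σ₁ i * ∑ j, M i j * σ₂ j
        ≤ ∑ i, σ₁ i * Finset.univ.sup' Finset.univ_nonempty (fun i => ∑ j, M i j * σ₂ j) := by
          refine Finset.sum_le_sum fun i _ => ?_
          exact mul_le_mul_of_nonneg_left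
            (Finset.le_sup' (fun i => ∑ j, M i j * σ₂ j) (Finset.mem_univ i)) (h₁.1 i)
      _ = _ := by rw [← Finset.sum_mul, h₁.2, one_mul]

lemma brVal2_isLeast {m n : ℕ} (M : Fin (m+1) → Fin (n+1) → ℝ) (σ₁ : Fin (m+1) → ℝ)
    (_h₁ : IsMixed σ₁) :
    IsLeast {x : ℝ | ∃ σ₂, IsMixed σ₂ ∧ x = pay M σ₁ σ₂}
      (Finset.univ.inf' Finset.univ_nonempty (fun j => ∑ i, σ₁ i * M i j)) := by
  constructor
  · obtain ⟨j₀, _, hj₀⟩ := Finset.exists_mem_eq_inf' Finset.univ_nonempty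
      (fun j => ∑ i, σ₁ i * M i j)
    refine ⟨fun j => if j = j₀ then 1 else 0, isMixed_pure_s15 j₀, ?_⟩
    rw [hj₀, pay_eq_cols]
    rw [Finset.sum_eq_single_of_mem j₀ (Finset.mem_univ _)]
    · simp
    · intro j _ hj; simp [hj]
  · rintro x ⟨σ₂, h₂, rfl⟩
    rw [pay_eq_cols]
    calc Finset.univ.inf' Finset.univ_nonempty (fun j => ∑ i, σ₁ i * M i j)
        = ∑ j, σ₂ j * Finset.univ.inf' Finset.univ_nonempty (fun j => ∑ i, σ₁ i * M i j) := by
          rw [← Finset.sum_mul, h₂.2, one_mul]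
      _ ≤ ∑ j, σ₂ j * ∑ i, σ₁ i * M i j := by
          refine Finset.sum_le_sum fun j _ => ?_
          exact mul_le_mul_of_nonneg_left
            (Finset.inf'_le (fun j => ∑ i, σ₁ i * M i j) (Finset.mem_univ j)) (h₂.1 j)

lemma brVal1_eq {m n : ℕ} (M : Fin (m+1) → Fin (n+1) → ℝ) (σ₂ : Fin (n+1) → ℝ)
    (h₂ : IsMixed σ₂) :
    brVal1 M σ₂ = Finset.univ.sup' Finset.univ_nonempty (fun i => ∑ j, M i j * σ₂ j) :=
  (brVal1_isGreatest M σ₂ h₂).csSup_eq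

lemma brVal2_eq {m n : ℕ} (M : Fin (m+1) → Fin (n+1) → ℝ) (σ₁ : Fin (m+1) → ℝ)
    (h₁ : IsMixed σ₁) :
    brVal2 M σ₁ = Finset.univ.inf' Finset.univ_nonempty (fun j => ∑ i, σ₁ i * M i j) :=
  (brVal2_isLeast M σ₁ h₁).csInf_eq

lemma pay_le_brVal1 {m n : ℕ} (M : Fin (m+1) → Fin (n+1) → ℝ) {σ₁ σ₂}
    (h₁ : IsMixed σ₁) (h₂ : IsMixed σ₂) : pay M σ₁ σ₂ ≤ brVal1 M σ₂ := by
  rw [brVal1_eq M σ₂ h₂]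
  exact (brVal1_isGreatest M σ₂ h₂).2 ⟨σ₁, h₁, rfl⟩

lemma brVal2_le_pay {m n : ℕ} (M : Fin (m+1) → Fin (n+1) → ℝ) {σ₁ σ₂}
    (h₁ : IsMixed σ₁) (h₂ : IsMixed σ₂) : brVal2 M σ₁ ≤ pay M σ₁ σ₂ := by
  rw [brVal2_eq M σ₁ h₁]
  exact (brVal2_isLeast M σ₁ h₁).2 ⟨σ₂, h₂, rfl⟩

lemma val_le_brVal1 {m n : ℕ} (M : Fin (m+1) → Fin (n+1) → ℝ)
    (hM : ∀ i j, M i j ∈ Set.Icc (0:ℝ) 1) {v : ℝ} (hv : HasValue M v)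
    {σ₂ : Fin (n+1) → ℝ} (h₂ : IsMixed σ₂) : v ≤ brVal1 M σ₂ := by
  rw [← hv.2]
  refine csInf_le ⟨0, ?_⟩ ⟨σ₂, h₂, rfl⟩
  rintro x ⟨σ₂', h', rfl⟩
  rw [brVal1_eq M σ₂' h']
  refine le_trans ?_ (Finset.le_sup' (fun i => ∑ j, M i j * σ₂' j) (Finset.mem_univ 0))
  exact Finset.sum_nonneg fun j _ => mul_nonneg (hM 0 j).1 (h'.1 j)

lemma brVal2_le_val {m n : ℕ} (M : Fin (m+1) → Fin (n+1) → ℝ)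
    (hM : ∀ i j, M i j ∈ Set.Icc (0:ℝ) 1) {v : ℝ} (hv : HasValue M v)
    {σ₁ : Fin (m+1) → ℝ} (h₁ : IsMixed σ₁) : brVal2 M σ₁ ≤ v := by
  rw [← hv.1]
  refine le_csSup ⟨1, ?_⟩ ⟨σ₁, h₁, rfl⟩
  rintro x ⟨σ₁', h', rfl⟩
  rw [brVal2_eq M σ₁' h']
  refine le_trans (Finset.inf'_le (fun j => ∑ i, σ₁' i * M i j) (Finset.mem_univ 0)) ?_
  calc ∑ i, σ₁' i * M i 0 ≤ ∑ i, σ₁' i * 1 :=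
        Finset.sum_le_sum fun i _ => mul_le_mul_of_nonneg_left (hM i 0).2 (h'.1 i)
    _ = 1 := by simp only [mul_one]; exact h'.2

lemma empFreq_isMixed {k : ℕ} (a : ℕ → Fin k) (t : ℕ) (ht : 1 ≤ t) :
    IsMixed (empFreq a t) := by
  constructor
  · intro x; exact div_nonneg (Nat.cast_nonneg _) (Nat.cast_nonneg _)
  · unfold empFreq
    rw [← Finset.sum_div, div_eq_one_iff_eq (by positivity : (t:ℝ) ≠ 0), ← Nat.cast_sum]
    norm_cast
    rw [← Finset.card_eq_sum_card_fiberwise (fun s _ => Finset.mem_univ (a s))]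
    simp

lemma sum_comp_eq {k : ℕ} (a : ℕ → Fin k) (t : ℕ) (F : Fin k → ℝ) :
    ∑ s ∈ Finset.Icc 1 t, F (a s)
      = ∑ x, (((Finset.Icc 1 t).filter (fun s => a s = x)).card : ℝ) * F x := by
  rw [← Finset.sum_fiberwise (Finset.Icc 1 t) a (fun s => F (a s))]
  refine Finset.sum_congr rfl fun x _ => ?_
  rw [Finset.sum_congr rfl (fun s hs => by
    rw [(Finset.mem_filter.mp hs).2]), Finset.sum_const, nsmul_eq_mul]

lemma abs_sum_le_of_eventually (t S : ℕ) (c : ℝ) (hc : 0 ≤ c) (d : ℕ → ℝ)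
    (hd1 : ∀ s, |d s| ≤ 1) (hd2 : ∀ s, S ≤ s → |d s| ≤ c) :
    |∑ s ∈ Finset.Icc 1 t, d s| ≤ S + t * c := by
  calc |∑ s ∈ Finset.Icc 1 t, d s| ≤ ∑ s ∈ Finset.Icc 1 t, |d s| :=
        Finset.abs_sum_le_sum_abs _ _
    _ ≤ ∑ s ∈ Finset.Icc 1 t, (if s < S then (1:ℝ) else c) := by
        refine Finset.sum_le_sum fun s _ => ?_
        split
        · exact hd1 s
        · exact hd2 s (by omega)
    _ ≤ S + t * c := by
        rw [Finset.sum_ite]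
        have h1 : (((Finset.Icc 1 t).filter (fun s => s < S)).card : ℝ) ≤ S := by
          have hsub : ((Finset.Icc 1 t).filter (fun s => s < S)) ⊆ Finset.Ico 1 S := by
            intro s hs
            simp only [Finset.mem_filter, Finset.mem_Icc, Finset.mem_Ico] at *
            omega
          calc (((Finset.Icc 1 t).filter (fun s => s < S)).card : ℝ)
              ≤ ((Finset.Ico 1 S).card : ℝ) := by exact_mod_cast Finset.card_le_card hsub
            _ ≤ S := by rw [Nat.card_Ico]; exact_mod_cast Nat.sub_le S 1
        have h2 : (((Finset.Icc 1 t).filter (fun s => ¬ s < S)).card : ℝ) ≤ t := by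
          have := Finset.card_le_card (Finset.filter_subset (fun s => ¬ s < S) (Finset.Icc 1 t))
          rw [Nat.card_Icc] at this
          exact_mod_cast le_trans this (by omega)
        rw [Finset.sum_const, Finset.sum_const, nsmul_eq_mul, nsmul_eq_mul, mul_one]
        have := mul_le_mul_of_nonneg_right h2 hc
        linarith

lemma key_lemma {m n : ℕ} (ε : ℝ) (vmat : Fin (m+1) → Fin (n+1) → ℝ)
    (g : Fin (m+1) → Fin (n+1) → ℕ → ℝ)
    (hconv : ∀ i j, ∀ δ' > (0:ℝ), ∃ k₀ : ℕ, ∀ k ≥ k₀, |g i j k - vmat i j| < ε + δ')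
    (iseq : ℕ → Fin (m+1)) (jseq : ℕ → Fin (n+1))
    (hio : ∀ i j, {s : ℕ | 1 ≤ s ∧ iseq s = i ∧ jseq s = j}.Infinite)
    (δ' : ℝ) (hδ' : 0 < δ') :
    ∃ S : ℕ, ∀ s, S ≤ s → ∀ i j,
      |g i j (visitCount iseq jseq i j s) - vmat i j| < ε + δ' := by
  choose k₀ hk₀ using fun i j => hconv i j δ' hδ'
  set K : ℕ := Finset.univ.sup (fun i : Fin (m+1) => Finset.univ.sup (k₀ i)) with hK
  have hKk : ∀ i j, k₀ i j ≤ K := fun i j =>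
    le_trans (Finset.le_sup (Finset.mem_univ j))
      (Finset.le_sup (f := fun i => Finset.univ.sup (k₀ i)) (Finset.mem_univ i))
  choose T hT hTcard using fun i j => (hio i j).exists_subset_card_eq K
  set S : ℕ := Finset.univ.sup (fun i : Fin (m+1) =>
    Finset.univ.sup (fun j : Fin (n+1) => (T i j).sup id)) with hS
  refine ⟨S, fun s hs i j => ?_⟩
  have hsub : T i j ⊆ (Finset.Icc 1 s).filter (fun s' => iseq s' = i ∧ jseq s' = j) := by
    intro x hx
    obtain ⟨h1, h2, h3⟩ := hT i j hx
    refine Finset.mem_filter.mpr ⟨Finset.mem_Icc.mpr ⟨h1, ?_⟩, h2, h3⟩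
    have hmax : (T i j).sup id ≤ S :=
      le_trans (Finset.le_sup (f := fun j => (T i j).sup id) (Finset.mem_univ j))
        (Finset.le_sup (f := fun i => Finset.univ.sup fun j => (T i j).sup id)
          (Finset.mem_univ i))
    exact le_trans (le_trans (Finset.le_sup (f := id) hx) hmax) hs
  have hcard : K ≤ visitCount iseq jseq i j s := by
    rw [← hTcard i j]; exact Finset.card_le_card hsub
  exact hk₀ i j _ (le_trans (hKk i j) hcard)

lemma abs_diff_le_one_of_Icc {x y : ℝ} (hx : x ∈ Set.Icc (0:ℝ) 1) (hy : y ∈ Set.Icc (0:ℝ) 1) :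
    |x - y| ≤ 1 :=
  abs_le.mpr ⟨by linarith [hx.1, hy.2], by linarith [hx.2, hy.1]⟩

/-- depth-2 instance of the main SM-MCTS convergence theorem. Each child
subgame `(i,j)` produces a sequence of returned mean values `g^{ij}(k)` eventually within
`ε + δ'` of its value `v^{ij}`; if both players are `ε`-Hannan consistent with respect to
the observed payoffs `g^{i_s j_s}(k_s)`, then (a) the empirical frequencies eventually form
an `(8ε + δ)`-equilibrium of the exact matrix game `M = (v^{ij})`, and (b) the average
observed payoff eventually lies within `2ε + δ` of the value `v` of `M`. -/
theorem depth_two_smmcts_convergence (m n : ℕ) (ε : ℝ) (hε : 0 < ε)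
    (vmat : Fin (m+1) → Fin (n+1) → ℝ) (hvmat : ∀ i j, vmat i j ∈ Set.Icc (0:ℝ) 1)
    (g : Fin (m+1) → Fin (n+1) → ℕ → ℝ) (hg : ∀ i j k, g i j k ∈ Set.Icc (0:ℝ) 1)
    (hconv : ∀ i j, ∀ δ' > (0:ℝ), ∃ k₀ : ℕ, ∀ k ≥ k₀, |g i j k - vmat i j| < ε + δ')
    (v : ℝ) (hv : HasValue vmat v)
    (iseq : ℕ → Fin (m+1)) (jseq : ℕ → Fin (n+1))
    (hio : ∀ i j, {s : ℕ | 1 ≤ s ∧ iseq s = i ∧ jseq s = j}.Infinite)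
    (hr1 : Filter.limsup
      (fun t : ℕ =>
        ((Finset.univ.sup' Finset.univ_nonempty fun i =>
            ∑ s ∈ Finset.Icc 1 t, g i (jseq s) (visitCount iseq jseq i (jseq s) s)) -
          ∑ s ∈ Finset.Icc 1 t,
            g (iseq s) (jseq s) (visitCount iseq jseq (iseq s) (jseq s) s)) / t)
      Filter.atTop ≤ ε)
    (hr2 : Filter.limsup
      (fun t : ℕ =>
        ((Finset.univ.sup' Finset.univ_nonempty fun j =>
            ∑ s ∈ Finset.Icc 1 t, (1 - g (iseq s) j (visitCount iseq jseq (iseq s) j s))) -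
          ∑ s ∈ Finset.Icc 1 t,
            (1 - g (iseq s) (jseq s) (visitCount iseq jseq (iseq s) (jseq s) s))) / t)
      Filter.atTop ≤ ε) :
    (∀ δ > (0:ℝ), ∃ t₀ : ℕ, ∀ t ≥ t₀,
        IsEpsEquilibrium vmat (8 * ε + δ) (empFreq iseq t) (empFreq jseq t)) ∧
      (∀ δ > (0:ℝ),
        v - 2 * ε - δ ≤
            Filter.liminf
              (fun t : ℕ => (∑ s ∈ Finset.Icc 1 t,
                g (iseq s) (jseq s) (visitCount iseq jseq (iseq s) (jseq s) s)) / t)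
              Filter.atTop ∧
          Filter.liminf
              (fun t : ℕ => (∑ s ∈ Finset.Icc 1 t,
                g (iseq s) (jseq s) (visitCount iseq jseq (iseq s) (jseq s) s)) / t)
              Filter.atTop ≤
            Filter.limsup
              (fun t : ℕ => (∑ s ∈ Finset.Icc 1 t,
                g (iseq s) (jseq s) (visitCount iseq jseq (iseq s) (jseq s) s)) / t)
              Filter.atTop ∧
          Filter.limsup
              (fun t : ℕ => (∑ s ∈ Finset.Icc 1 t,
                g (iseq s) (jseq s) (visitCount iseq jseq (iseq s) (jseq s) s)) / t)
              Filter.atTop ≤ v + 2 * ε + δ) := by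
    classical
  -- basic bounds on the sums
  have hGnn : ∀ t : ℕ, (0:ℝ) ≤ ∑ s ∈ Finset.Icc 1 t,
      g (iseq s) (jseq s) (visitCount iseq jseq (iseq s) (jseq s) s) :=
    fun t => Finset.sum_nonneg fun s _ => (hg _ _ _).1
  have hcardIcc : ∀ t : ℕ, ((Finset.Icc 1 t).card : ℝ) = t := by
    intro t; rw [Nat.card_Icc, Nat.add_sub_cancel]
  have hsum_one : ∀ t : ℕ, ∑ s ∈ Finset.Icc 1 t, (1:ℝ) = t := by
    intro t; rw [Finset.sum_const, nsmul_eq_mul, mul_one, hcardIcc]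
  -- boundedness of regret functions
  have hb1 : Filter.IsBoundedUnder (· ≤ ·) Filter.atTop
      (fun t : ℕ =>
        ((Finset.univ.sup' Finset.univ_nonempty fun i =>
            ∑ s ∈ Finset.Icc 1 t, g i (jseq s) (visitCount iseq jseq i (jseq s) s)) -
          ∑ s ∈ Finset.Icc 1 t,
            g (iseq s) (jseq s) (visitCount iseq jseq (iseq s) (jseq s) s)) / t) := by
    refine isBoundedUnder_of ⟨1, fun t => ?_⟩
    rcases Nat.eq_zero_or_pos t with h0 | h0
    · subst h0; simp
    · rw [div_le_one (by exact_mod_cast h0)]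
      have h1 : (Finset.univ.sup' Finset.univ_nonempty fun i =>
          ∑ s ∈ Finset.Icc 1 t, g i (jseq s) (visitCount iseq jseq i (jseq s) s)) ≤ t := by
        refine Finset.sup'_le _ _ fun i _ => ?_
        calc ∑ s ∈ Finset.Icc 1 t, g i (jseq s) (visitCount iseq jseq i (jseq s) s)
            ≤ ∑ s ∈ Finset.Icc 1 t, (1:ℝ) :=
              Finset.sum_le_sum fun s _ => (hg _ _ _).2
          _ = t := hsum_one t
      linarith [hGnn t]
  have hb2 : Filter.IsBoundedUnder (· ≤ ·) Filter.atTop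
      (fun t : ℕ =>
        ((Finset.univ.sup' Finset.univ_nonempty fun j =>
            ∑ s ∈ Finset.Icc 1 t, (1 - g (iseq s) j (visitCount iseq jseq (iseq s) j s))) -
          ∑ s ∈ Finset.Icc 1 t,
            (1 - g (iseq s) (jseq s) (visitCount iseq jseq (iseq s) (jseq s) s))) / t) := by
    refine isBoundedUnder_of ⟨1, fun t => ?_⟩
    rcases Nat.eq_zero_or_pos t with h0 | h0
    · subst h0; simp
    · rw [div_le_one (by exact_mod_cast h0)]
      have h1 : (Finset.univ.sup' Finset.univ_nonempty fun j =>
          ∑ s ∈ Finset.Icc 1 t, (1 - g (iseq s) j (visitCount iseq jseq (iseq s) j s))) ≤ t := by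
        refine Finset.sup'_le _ _ fun j _ => ?_
        calc ∑ s ∈ Finset.Icc 1 t, (1 - g (iseq s) j (visitCount iseq jseq (iseq s) j s))
            ≤ ∑ s ∈ Finset.Icc 1 t, (1:ℝ) :=
              Finset.sum_le_sum fun s _ => by linarith [(hg (iseq s) j
                (visitCount iseq jseq (iseq s) j s)).1]
          _ = t := hsum_one t
      have h2 : (0:ℝ) ≤ ∑ s ∈ Finset.Icc 1 t,
          (1 - g (iseq s) (jseq s) (visitCount iseq jseq (iseq s) (jseq s) s)) :=
        Finset.sum_nonneg fun s _ => by linarith [(hg (iseq s) (jseq s)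
          (visitCount iseq jseq (iseq s) (jseq s) s)).2]
      linarith
  -- the master estimate
  have master : ∀ δ'' > (0:ℝ), ∃ t₀ : ℕ, 1 ≤ t₀ ∧ ∀ t, t₀ ≤ t →
      brVal1 vmat (empFreq jseq t) ≤ (∑ s ∈ Finset.Icc 1 t,
          g (iseq s) (jseq s) (visitCount iseq jseq (iseq s) (jseq s) s)) / t + 2*(ε+δ'') ∧
      (∑ s ∈ Finset.Icc 1 t,
          g (iseq s) (jseq s) (visitCount iseq jseq (iseq s) (jseq s) s)) / t ≤
        brVal2 vmat (empFreq iseq t) + 2*(ε+δ'') := by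
    intro δ'' hδ''
    obtain ⟨S, hS⟩ := key_lemma ε vmat g hconv iseq jseq hio (δ''/2) (by linarith)
    have he1 := eventually_lt_of_limsup_lt (lt_of_le_of_lt hr1
      (lt_add_of_pos_right ε hδ'')) hb1
    have he2 := eventually_lt_of_limsup_lt (lt_of_le_of_lt hr2
      (lt_add_of_pos_right ε hδ'')) hb2
    obtain ⟨t₁, ht₁⟩ := Filter.eventually_atTop.mp (he1.and he2)
    obtain ⟨N, hN⟩ := exists_nat_ge ((S:ℝ)/(δ''/2))
    refine ⟨max (max t₁ 1) N, le_trans (le_max_right t₁ 1) (le_max_left _ N), fun t ht => ?_⟩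
    have ht1 : 1 ≤ t := le_trans (le_trans (le_max_right t₁ 1) (le_max_left _ N)) ht
    have ht0 : (0:ℝ) < t := by exact_mod_cast ht1
    have htreg := ht₁ t (le_trans (le_trans (le_max_left t₁ 1) (le_max_left _ N)) ht)
    have htS : (S:ℝ) ≤ (t:ℝ) * (δ''/2) := by
      have h1 : (S:ℝ)/(δ''/2) ≤ (t:ℝ) := le_trans hN (by
        exact_mod_cast le_trans (le_max_right (max t₁ 1) N) ht)
      rw [div_le_iff₀ (by linarith)] at h1
      linarith
    -- abs bounds between g-sums and v-sums
    have habsA : ∀ i : Fin (m+1),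
        |(∑ s ∈ Finset.Icc 1 t, g i (jseq s) (visitCount iseq jseq i (jseq s) s)) -
          ∑ s ∈ Finset.Icc 1 t, vmat i (jseq s)| ≤ (t:ℝ) * (ε + δ'') := by
      intro i
      rw [← Finset.sum_sub_distrib]
      have := abs_sum_le_of_eventually t S (ε + δ''/2) (by linarith)
        (fun s => g i (jseq s) (visitCount iseq jseq i (jseq s) s) - vmat i (jseq s))
        (fun s => abs_diff_le_one_of_Icc (hg _ _ _) (hvmat _ _))
        (fun s hs => le_of_lt (hS s hs i (jseq s)))
      have hexp : (t:ℝ) * (ε + δ''/2) + S ≤ (t:ℝ) * (ε + δ'') := by ring_nf; nlinarith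
      linarith
    have habsB : ∀ j : Fin (n+1),
        |(∑ s ∈ Finset.Icc 1 t, g (iseq s) j (visitCount iseq jseq (iseq s) j s)) -
          ∑ s ∈ Finset.Icc 1 t, vmat (iseq s) j| ≤ (t:ℝ) * (ε + δ'') := by
      intro j
      rw [← Finset.sum_sub_distrib]
      have := abs_sum_le_of_eventually t S (ε + δ''/2) (by linarith)
        (fun s => g (iseq s) j (visitCount iseq jseq (iseq s) j s) - vmat (iseq s) j)
        (fun s => abs_diff_le_one_of_Icc (hg _ _ _) (hvmat _ _))
        (fun s hs => le_of_lt (hS s hs (iseq s) j))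
      have hexp : (t:ℝ) * (ε + δ''/2) + S ≤ (t:ℝ) * (ε + δ'') := by ring_nf; nlinarith
      linarith
    -- regret inequalities at time t (multiplied through by t)
    have hreg1 : (Finset.univ.sup' Finset.univ_nonempty fun i =>
        ∑ s ∈ Finset.Icc 1 t, g i (jseq s) (visitCount iseq jseq i (jseq s) s)) ≤
        (∑ s ∈ Finset.Icc 1 t,
          g (iseq s) (jseq s) (visitCount iseq jseq (iseq s) (jseq s) s)) +
          (t:ℝ) * (ε + δ'') := by
      have := htreg.1
      rw [div_lt_iff₀ ht0] at this
      linarith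
    have hreg2 : (Finset.univ.sup' Finset.univ_nonempty fun j =>
        ∑ s ∈ Finset.Icc 1 t, (1 - g (iseq s) j (visitCount iseq jseq (iseq s) j s))) ≤
        (∑ s ∈ Finset.Icc 1 t,
          (1 - g (iseq s) (jseq s) (visitCount iseq jseq (iseq s) (jseq s) s))) +
          (t:ℝ) * (ε + δ'') := by
      have := htreg.2
      rw [div_lt_iff₀ ht0] at this
      linarith
    -- row payoff bound
    have hRiG : ∀ i : Fin (m+1), (∑ s ∈ Finset.Icc 1 t, vmat i (jseq s)) ≤
        (∑ s ∈ Finset.Icc 1 t,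
          g (iseq s) (jseq s) (visitCount iseq jseq (iseq s) (jseq s) s)) +
          2 * ((t:ℝ) * (ε + δ'')) := by
      intro i
      have h1 : (∑ s ∈ Finset.Icc 1 t, g i (jseq s) (visitCount iseq jseq i (jseq s) s)) ≤
          (Finset.univ.sup' Finset.univ_nonempty fun i =>
            ∑ s ∈ Finset.Icc 1 t, g i (jseq s) (visitCount iseq jseq i (jseq s) s)) :=
        Finset.le_sup' (fun i =>
          ∑ s ∈ Finset.Icc 1 t, g i (jseq s) (visitCount iseq jseq i (jseq s) s))
          (Finset.mem_univ i)
      have h2 := habsA i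
      rw [abs_le] at h2
      linarith [h2.1, h2.2]
    -- column payoff bound
    have hGCj : ∀ j : Fin (n+1),
        (∑ s ∈ Finset.Icc 1 t,
          g (iseq s) (jseq s) (visitCount iseq jseq (iseq s) (jseq s) s)) ≤
        (∑ s ∈ Finset.Icc 1 t, vmat (iseq s) j) + 2 * ((t:ℝ) * (ε + δ'')) := by
      intro j
      have h1 : (∑ s ∈ Finset.Icc 1 t,
          (1 - g (iseq s) j (visitCount iseq jseq (iseq s) j s))) ≤
          (Finset.univ.sup' Finset.univ_nonempty fun j =>
            ∑ s ∈ Finset.Icc 1 t, (1 - g (iseq s) j (visitCount iseq jseq (iseq s) j s))) :=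
        Finset.le_sup' (fun j =>
          ∑ s ∈ Finset.Icc 1 t, (1 - g (iseq s) j (visitCount iseq jseq (iseq s) j s)))
          (Finset.mem_univ j)
      have e1 : ∑ s ∈ Finset.Icc 1 t,
          ((1:ℝ) - g (iseq s) j (visitCount iseq jseq (iseq s) j s)) =
          (t:ℝ) - ∑ s ∈ Finset.Icc 1 t, g (iseq s) j (visitCount iseq jseq (iseq s) j s) := by
        rw [Finset.sum_sub_distrib, hsum_one]
      have e2 : ∑ s ∈ Finset.Icc 1 t,
          ((1:ℝ) - g (iseq s) (jseq s) (visitCount iseq jseq (iseq s) (jseq s) s)) =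
          (t:ℝ) - ∑ s ∈ Finset.Icc 1 t,
            g (iseq s) (jseq s) (visitCount iseq jseq (iseq s) (jseq s) s) := by
        rw [Finset.sum_sub_distrib, hsum_one]
      have h2 := habsB j
      rw [abs_le] at h2
      rw [e1] at h1
      rw [e2] at hreg2
      linarith [h2.1, h2.2, le_trans h1 hreg2]
    have hmix1 := empFreq_isMixed iseq t ht1
    have hmix2 := empFreq_isMixed jseq t ht1
    constructor
    · -- brVal1 bound
      rw [brVal1_eq vmat _ hmix2]
      refine Finset.sup'_le _ _ fun i _ => ?_
      have hrow : ∑ j, vmat i j * empFreq jseq t j =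
          (∑ s ∈ Finset.Icc 1 t, vmat i (jseq s)) / t := by
        rw [sum_comp_eq jseq t (fun j => vmat i j), Finset.sum_div]
        refine Finset.sum_congr rfl fun j _ => ?_
        simp only [empFreq]
        ring
      rw [hrow]
      have h := hRiG i
      calc (∑ s ∈ Finset.Icc 1 t, vmat i (jseq s)) / t
          ≤ ((∑ s ∈ Finset.Icc 1 t,
              g (iseq s) (jseq s) (visitCount iseq jseq (iseq s) (jseq s) s)) +
              2 * ((t:ℝ) * (ε + δ''))) / t := by
            exact div_le_div_of_nonneg_right h ht0.le
        _ = (∑ s ∈ Finset.Icc 1 t,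
              g (iseq s) (jseq s) (visitCount iseq jseq (iseq s) (jseq s) s)) / t +
              2*(ε+δ'') := by
            field_simp
    · -- brVal2 bound
      rw [brVal2_eq vmat _ hmix1]
      have h2 : (∑ s ∈ Finset.Icc 1 t,
          g (iseq s) (jseq s) (visitCount iseq jseq (iseq s) (jseq s) s)) / t - 2*(ε+δ'') ≤
          Finset.univ.inf' Finset.univ_nonempty
            (fun j => ∑ i, empFreq iseq t i * vmat i j) := by
        refine Finset.le_inf' _ _ fun j _ => ?_
        have hcol : ∑ i, empFreq iseq t i * vmat i j =
            (∑ s ∈ Finset.Icc 1 t, vmat (iseq s) j) / t := by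
          rw [sum_comp_eq iseq t (fun i => vmat i j), Finset.sum_div]
          refine Finset.sum_congr rfl fun i _ => ?_
          simp only [empFreq]
          ring
        rw [hcol]
        have h := hGCj j
        rw [div_sub' (ne_of_gt ht0), div_le_div_iff₀ ht0 ht0]
        ring_nf
        nlinarith
      linarith
  -- boundedness of the average payoff
  have hG01 : ∀ t : ℕ, 0 ≤ (∑ s ∈ Finset.Icc 1 t,
      g (iseq s) (jseq s) (visitCount iseq jseq (iseq s) (jseq s) s)) / t ∧
      (∑ s ∈ Finset.Icc 1 t,
        g (iseq s) (jseq s) (visitCount iseq jseq (iseq s) (jseq s) s)) / t ≤ 1 := by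
    intro t
    rcases Nat.eq_zero_or_pos t with h0 | h0
    · subst h0; simp
    · have ht0 : (0:ℝ) < t := by exact_mod_cast h0
      refine ⟨div_nonneg (hGnn t) ht0.le, ?_⟩
      rw [div_le_one ht0]
      calc (∑ s ∈ Finset.Icc 1 t,
          g (iseq s) (jseq s) (visitCount iseq jseq (iseq s) (jseq s) s))
          ≤ ∑ s ∈ Finset.Icc 1 t, (1:ℝ) := Finset.sum_le_sum fun s _ => (hg _ _ _).2
        _ = t := hsum_one t
  have hbddle : Filter.IsBoundedUnder (· ≤ ·) Filter.atTop
      (fun t : ℕ => (∑ s ∈ Finset.Icc 1 t,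
        g (iseq s) (jseq s) (visitCount iseq jseq (iseq s) (jseq s) s)) / t) :=
    isBoundedUnder_of ⟨1, fun t => (hG01 t).2⟩
  have hbddge : Filter.IsBoundedUnder (· ≥ ·) Filter.atTop
      (fun t : ℕ => (∑ s ∈ Finset.Icc 1 t,
        g (iseq s) (jseq s) (visitCount iseq jseq (iseq s) (jseq s) s)) / t) :=
    isBoundedUnder_of ⟨0, fun t => (hG01 t).1⟩
  constructor
  · -- (a) approximate equilibrium
    intro δ hδ
    obtain ⟨t₀, ht₀1, h⟩ := master (δ/4) (by linarith)
    refine ⟨t₀, fun t ht => ?_⟩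
    obtain ⟨h1, h2⟩ := h t ht
    have ht1 : 1 ≤ t := le_trans ht₀1 ht
    have hmix1 := empFreq_isMixed iseq t ht1
    have hmix2 := empFreq_isMixed jseq t ht1
    have hp1 := pay_le_brVal1 vmat hmix1 hmix2
    have hp2 := brVal2_le_pay vmat hmix1 hmix2
    exact ⟨by linarith, by linarith⟩
  · -- (b) convergence of the average payoff
    intro δ hδ
    obtain ⟨t₀, ht₀1, h⟩ := master (δ/2) (by linarith)
    refine ⟨?_, Filter.liminf_le_limsup hbddle hbddge, ?_⟩
    · refine Filter.le_liminf_of_le hbddle.isCoboundedUnder_ge ?_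
      filter_upwards [Filter.eventually_ge_atTop t₀] with t ht
      have ht1 : 1 ≤ t := le_trans ht₀1 ht
      have hvb := val_le_brVal1 vmat hvmat hv (empFreq_isMixed jseq t ht1)
      have h1 := (h t ht).1
      linarith
    · refine Filter.limsup_le_of_le hbddge.isCoboundedUnder_le ?_
      filter_upwards [Filter.eventually_ge_atTop t₀] with t ht
      have ht1 : 1 ≤ t := le_trans ht₀1 ht
      have hvb := brVal2_le_val vmat hvmat hv (empFreq_isMixed iseq t ht1)
      have h2 := (h t ht).2
      linarith
end
end
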